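/- Let H be a complex separable infinite-dimensional Hilbert space, let E ⊆ c₀ be a Banach symmetric sequence space, and let C_E^h = { x ∈ C_E : x = x* } be the real Banach space of self-adjoint elements of the Banach symmetric ideal C_E with the norm ‖·‖_{C_E}. Then every continuous real-linear functional f on C_E^h is the difference of two positive continuous linear functionals on C_E^h (a functional g is positive if g(x) ≥ 0 for every x ∈ C_E^h with x ≥ 0). -/

import Mathlib

open scoped InnerProductSpace
open Filter Topology

noncomputable section

/-- The non-increasing rearrangement `x*` of a bounded real sequence:
`x*_n = inf_{|F| ≤ n} sup_{k ∉ F} |x k|`. -/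
noncomputable def decRearrange (x : ℕ → ℝ) (n : ℕ) : ℝ :=
  sInf {c : ℝ | ∃ F : Finset ℕ, F.card ≤ n ∧ ∀ k ∉ F, |x k| ≤ c}

/-- A Banach symmetric sequence space: a nonzero linear subspace of `ℓ∞` (real bounded
sequences) equipped with a complete norm such that `x* ≤ y*` pointwise and `y ∈ E` imply
`x ∈ E` with `‖x‖_E ≤ ‖y‖_E`. -/
structure BanachSymmSeqSpace where
  carrier : Set (ℕ → ℝ)
  bdd : ∀ x ∈ carrier, ∃ C : ℝ, ∀ n, |x n| ≤ C
  zero_mem : (0 : ℕ → ℝ) ∈ carrier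
  add_mem : ∀ x ∈ carrier, ∀ y ∈ carrier, x + y ∈ carrier
  smul_mem : ∀ (c : ℝ), ∀ x ∈ carrier, c • x ∈ carrier
  nontrivial : ∃ x ∈ carrier, x ≠ 0
  nrm : (ℕ → ℝ) → ℝ
  nrm_zero : nrm 0 = 0
  nrm_pos : ∀ x ∈ carrier, x ≠ 0 → 0 < nrm x
  nrm_smul : ∀ (c : ℝ), ∀ x ∈ carrier, nrm (c • x) = |c| * nrm x
  nrm_triangle : ∀ x ∈ carrier, ∀ y ∈ carrier, nrm (x + y) ≤ nrm x + nrm y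
  complete : ∀ u : ℕ → ℕ → ℝ, (∀ n, u n ∈ carrier) →
    (∀ ε : ℝ, 0 < ε → ∃ N, ∀ m ≥ N, ∀ k ≥ N, nrm (u m - u k) < ε) →
    ∃ x ∈ carrier, ∀ ε : ℝ, 0 < ε → ∃ N, ∀ m ≥ N, nrm (u m - x) < ε
  symmetric : ∀ x : ℕ → ℝ, ∀ y ∈ carrier, (∃ C : ℝ, ∀ n, |x n| ≤ C) →
    (∀ n, decRearrange x n ≤ decRearrange y n) → x ∈ carrier ∧ nrm x ≤ nrm y

/-- `E ⊆ c₀`: every element of `E` tends to zero. -/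
def BanachSymmSeqSpace.SubsetC0 (S : BanachSymmSeqSpace) : Prop :=
  ∀ x ∈ S.carrier, Filter.Tendsto x Filter.atTop (nhds 0)

/-- The Fatou property of a Banach symmetric sequence space. -/
def BanachSymmSeqSpace.Fatou (S : BanachSymmSeqSpace) : Prop :=
  ∀ a : ℕ → ℕ → ℝ, (∀ k, a k ∈ S.carrier) → (∀ k n, 0 ≤ a k n) →
    (∀ k n, a k n ≤ a (k + 1) n) → (∃ C : ℝ, ∀ k, S.nrm (a k) ≤ C) →
    ∃ b ∈ S.carrier, (∀ n, IsLUB {r : ℝ | ∃ k, r = a k n} (b n)) ∧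
      IsLUB {r : ℝ | ∃ k, r = S.nrm (a k)} (S.nrm b)

/-- `E = ℓ₂` as a set of sequences. -/
def ellTwo : Set (ℕ → ℝ) := {x : ℕ → ℝ | Summable fun n => (x n) ^ 2}

section OperatorIdeal

variable {H : Type*} [NormedAddCommGroup H] [InnerProductSpace ℂ H] [CompleteSpace H]

/-- The `n`-th singular value (approximation number) of an operator:
`s_n(x) = inf { ‖x - F‖ : rank F ≤ n }` (so `s_0(x) = ‖x‖`). For compact operators this is
the `n`-th eigenvalue (in decreasing order) of `(x*x)^{1/2}`. -/
noncomputable def singVal (x : H →L[ℂ] H) (n : ℕ) : ℝ :=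
  sInf {c : ℝ | ∃ F : H →L[ℂ] H, FiniteDimensional ℂ (LinearMap.range (F : H →ₗ[ℂ] H)) ∧
    Module.finrank ℂ (LinearMap.range (F : H →ₗ[ℂ] H)) ≤ n ∧ ‖x - F‖ = c}

/-- The Banach symmetric ideal `C_E` of compact operators whose singular value sequence
belongs to `E`. -/
def CE (S : BanachSymmSeqSpace) : Set (H →L[ℂ] H) :=
  {x | IsCompactOperator (⇑x) ∧ (fun n => singVal x n) ∈ S.carrier}

/-- The norm `‖x‖_{C_E} = ‖{s_n(x)}‖_E` of the Banach symmetric ideal `C_E`. -/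
noncomputable def CEnorm (S : BanachSymmSeqSpace) (x : H →L[ℂ] H) : ℝ :=
  S.nrm (fun n => singVal x n)

/-- A trace class operator: a compact operator with summable singular values. -/
def IsTraceClass (z : H →L[ℂ] H) : Prop :=
  IsCompactOperator (⇑z) ∧ Summable fun n => singVal z n

/-- The Köthe dual `C_E^× = { y ∈ B(H) : x y is trace class for every x ∈ C_E }`. -/
def KDual (S : BanachSymmSeqSpace) : Set (H →L[ℂ] H) :=
  {y : H →L[ℂ] H | ∀ x ∈ CE (H := H) S, IsTraceClass (x * y)}

/-- The trace of an operator computed with respect to a Hilbert basis `b`: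
`tr z = Σ_i ⟪b i, z (b i)⟫` (basis independent for trace class operators). -/
noncomputable def traceB (b : HilbertBasis ℕ ℂ H) (z : H →L[ℂ] H) : ℂ :=
  ∑' i, ⟪b i, z (b i)⟫_ℂ

/-- The weak topology `σ(C_E, C_E^×)` on `C_E`, generated by the functionals
`x ↦ tr (x y)`, `y ∈ C_E^×`. -/
noncomputable def sigmaTop (S : BanachSymmSeqSpace) (b : HilbertBasis ℕ ℂ H) :
    TopologicalSpace {x : H →L[ℂ] H // x ∈ CE (H := H) S} :=
  ⨅ y : {y : H →L[ℂ] H // y ∈ KDual (H := H) S},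
    TopologicalSpace.induced (fun x => traceB b (x.1 * y.1)) inferInstance

/-- The ball topology `b_{C_E}`: the coarsest topology in which every closed norm ball
of `(C_E, ‖·‖_{C_E})` is closed. -/
noncomputable def ballTop (S : BanachSymmSeqSpace) :
    TopologicalSpace {x : H →L[ℂ] H // x ∈ CE (H := H) S} :=
  TopologicalSpace.generateFrom
    {s | ∃ (c : {x : H →L[ℂ] H // x ∈ CE (H := H) S}) (ε : ℝ), 0 < ε ∧
      s = {y : {x : H →L[ℂ] H // x ∈ CE (H := H) S} | CEnorm S (y.1 - c.1) ≤ ε}ᶜ}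

/-- `W` is a surjective (complex-)linear isometry of the Banach symmetric ideal `C_E`. -/
def SurjLinearIsomOn (S : BanachSymmSeqSpace) (W : (H →L[ℂ] H) → (H →L[ℂ] H)) : Prop :=
  (∀ x ∈ CE (H := H) S, W x ∈ CE (H := H) S) ∧
  (∀ y ∈ CE (H := H) S, ∃ x ∈ CE (H := H) S, W x = y) ∧
  (∀ x ∈ CE (H := H) S, ∀ y ∈ CE (H := H) S, W (x + y) = W x + W y) ∧
  (∀ (c : ℂ), ∀ x ∈ CE (H := H) S, W (c • x) = c • W x) ∧
  (∀ x ∈ CE (H := H) S, CEnorm S (W x) = CEnorm S x)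

end OperatorIdeal

end

/-- The real Banach space `C_E^h` of self-adjoint elements of `C_E`. -/
def CEh {H : Type*} [NormedAddCommGroup H] [InnerProductSpace ℂ H] [CompleteSpace H]
    (S : BanachSymmSeqSpace) : Set (H →L[ℂ] H) :=
  {x : H →L[ℂ] H | x ∈ CE (H := H) S ∧ IsSelfAdjoint x}

/-- `f` is a continuous (bounded) real-linear functional on `C_E^h`. -/
def RealFunctionalOn {H : Type*} [NormedAddCommGroup H] [InnerProductSpace ℂ H]
    [CompleteSpace H] (S : BanachSymmSeqSpace) (f : (H →L[ℂ] H) → ℝ) : Prop :=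
  (∀ a ∈ CEh (H := H) S, ∀ b ∈ CEh (H := H) S, f (a + b) = f a + f b) ∧
  (∀ (c : ℝ), ∀ a ∈ CEh (H := H) S, f (((c : ℂ)) • a) = c * f a) ∧
  (∃ M : ℝ, ∀ a ∈ CEh (H := H) S, |f a| ≤ M * CEnorm S a)

/-!
Let `|f a| ≤ M ‖a‖` on `C_E^h`. If `0 ≤ d ≤ Σ cᵢ`, Douglas' factorisation applied to the square
roots gives a contraction `u` with `d = u (Σ cᵢ) u* = Σ u cᵢ u*`; conjugation by a contraction does
not increase singular values, so `f d ≤ M Σ ‖cᵢ‖`. Consequently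
`q x = inf {M Σ ‖cᵢ‖ - f d : 0 ≤ d, x + d ≤ Σ cᵢ}` is a real-valued sublinear functional with
`q ≤ M ‖·‖`. A Hahn–Banach functional `g ≤ q` is positive (`q (-x) ≤ 0` for `x ≥ 0`) and dominates
`f` on the positive cone (`q (-x) ≤ -f x`), so `f = g - (g - f)`. The finite lists `cᵢ` make `q`
subadditive without the triangle inequality for `‖·‖_{C_E}`, which singular value estimates
alone do not provide.
-/

section Majorant

variable {V : Type*} [AddCommGroup V] [PartialOrder V] [Module ℝ V]
  (f : V →ₗ[ℝ] ℝ) (ν : V → ℝ)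

def BoundedBySums : Prop :=
  ∀ (d : V) (L : List V), 0 ≤ d → d ≤ L.sum → f d ≤ (L.map ν).sum

def majorantValues (x : V) : Set ℝ :=
  {r | ∃ (L : List V) (d : V), 0 ≤ d ∧ x + d ≤ L.sum ∧ r = (L.map ν).sum - f d}

noncomputable def majorant (x : V) : ℝ := sInf (majorantValues f ν x)

variable {f ν}

theorem sub_mem_majorantValues {x d : V} (L : List V) (hd : 0 ≤ d) (hle : x + d ≤ L.sum) :
    (L.map ν).sum - f d ∈ majorantValues f ν x :=
  ⟨L, d, hd, hle, rfl⟩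

theorem majorant_zero_nonneg (hfν : BoundedBySums f ν) : 0 ≤ majorant f ν (0 : V) := by
  refine le_csInf ⟨_, sub_mem_majorantValues [] le_rfl (by simp)⟩ ?_
  rintro _ ⟨L, d, hd, hle, rfl⟩
  exact sub_nonneg.2 (hfν d L hd (by simpa using hle))

variable [IsOrderedAddMonoid V]

theorem bddBelow_majorantValues (hfν : BoundedBySums f ν) (x : V) :
    BddBelow (majorantValues f ν x) := by
  refine ⟨-ν (-x), ?_⟩
  rintro _ ⟨L, d, hd, hle, rfl⟩
  have := hfν d (L ++ [-x]) hd <| by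
    calc d = (x + d) + -x := by abel
      _ ≤ (L ++ [-x]).sum := by simpa using add_le_add_left hle (-x)
  simp only [List.map_append, List.sum_append, List.map_cons, List.map_nil, List.sum_cons,
    List.sum_nil, add_zero] at this
  linarith

theorem majorant_le (hfν : BoundedBySums f ν) {x d : V} (L : List V) (hd : 0 ≤ d)
    (hle : x + d ≤ L.sum) : majorant f ν x ≤ (L.map ν).sum - f d :=
  csInf_le (bddBelow_majorantValues hfν x) (sub_mem_majorantValues L hd hle)

theorem majorant_le_self (hfν : BoundedBySums f ν) (x : V) : majorant f ν x ≤ ν x := by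
  simpa using majorant_le hfν [x] le_rfl (by simp)

theorem majorant_add_le (hfν : BoundedBySums f ν) (x y : V) :
    majorant f ν (x + y) ≤ majorant f ν x + majorant f ν y := by
  have hne (z : V) : (majorantValues f ν z).Nonempty :=
    ⟨_, sub_mem_majorantValues [z] le_rfl (by simp)⟩
  have hbdd := bddBelow_majorantValues hfν
  rw [majorant, majorant, majorant, ← csInf_add (hne x) (hbdd x) (hne y) (hbdd y)]
  refine csInf_le_csInf (hbdd _) ((hne x).add (hne y)) ?_
  rintro _ ⟨_, ⟨L₁, d₁, hd₁, hle₁, rfl⟩, _, ⟨L₂, d₂, hd₂, hle₂, rfl⟩, rfl⟩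
  convert sub_mem_majorantValues (f := f) (ν := ν) (L₁ ++ L₂) (add_nonneg hd₁ hd₂) ?_ using 1
  · simp only [List.map_append, List.sum_append, map_add]; ring
  · calc x + y + (d₁ + d₂) = (x + d₁) + (y + d₂) := by abel
      _ ≤ (L₁ ++ L₂).sum := by simpa using add_le_add hle₁ hle₂

theorem majorant_smul [PosSMulMono ℝ V] (hfν : BoundedBySums f ν)
    (hν : ∀ c : ℝ, 0 < c → ∀ x : V, ν (c • x) ≤ c * ν x) {c : ℝ} (hc : 0 < c) (x : V) :
    majorant f ν (c • x) = c * majorant f ν x := by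
  have smul_le (c : ℝ) (hc : 0 < c) (x : V) : majorant f ν (c • x) ≤ c * majorant f ν x := by
    rw [← div_le_iff₀' hc]
    refine le_csInf ⟨_, sub_mem_majorantValues [x] le_rfl (by simp)⟩ ?_
    rintro _ ⟨L, d, hd, hle, rfl⟩
    rw [div_le_iff₀' hc]
    refine (majorant_le hfν (L.map (c • ·)) (smul_nonneg hc.le hd) ?_).trans ?_
    · simpa [← List.smul_sum, smul_add] using smul_le_smul_of_nonneg_left hle hc.le
    · rw [map_smul, smul_eq_mul, mul_sub, ← List.sum_map_mul_left, List.map_map]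
      exact sub_le_sub_right (List.sum_le_sum fun a _ => hν c hc a) _
  refine le_antisymm (smul_le c hc x) ?_
  have := smul_le c⁻¹ (inv_pos.2 hc) (c • x)
  rwa [inv_smul_smul₀ hc.ne', le_inv_mul_iff₀ hc] at this

theorem exists_nonneg_linearMap_ge [PosSMulMono ℝ V] (hfν : BoundedBySums f ν)
    (hν : ∀ c : ℝ, 0 < c → ∀ x : V, ν (c • x) ≤ c * ν x) :
    ∃ g : V →ₗ[ℝ] ℝ, (∀ x, g x ≤ ν x) ∧ (∀ x, 0 ≤ x → 0 ≤ g x) ∧ (∀ x, 0 ≤ x → f x ≤ g x) := by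
  obtain ⟨g, -, hg⟩ := exists_extension_of_le_sublinear ⟨⊥, 0⟩ (majorant f ν)
    (fun c hc x => majorant_smul hfν hν hc x) (majorant_add_le hfν)
    (fun x => by simpa [(Submodule.mem_bot ℝ).1 x.2] using majorant_zero_nonneg hfν)
  have le_of_le (x d : V) (hd : 0 ≤ d) (hdx : d ≤ x) : f d ≤ g x := by
    have := (hg (-x)).trans (majorant_le hfν [] hd (by simpa [neg_add_eq_sub] using hdx))
    simpa using this
  exact ⟨g, fun x => (hg x).trans (majorant_le_self hfν x),
    fun x hx => by simpa using le_of_le x 0 le_rfl hx, fun x hx => le_of_le x x hx le_rfl⟩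

end Majorant

theorem decRearrange_le_of_comp {x y : ℕ → ℝ} (hy : ∃ C, ∀ k, |y k| ≤ C) (e : ℕ → ℕ)
    (hx₀ : ∀ k ∉ Set.range e, x k = 0) (hxy : ∀ j, |x (e j)| ≤ |y j|) (n : ℕ) :
    decRearrange x n ≤ decRearrange y n := by
  obtain ⟨C, hC⟩ := hy
  refine csInf_le_csInf ⟨0, ?_⟩ ⟨C, ∅, by simp, fun k _ => hC k⟩ ?_
  · rintro c ⟨F, -, hF⟩
    obtain ⟨k, hk⟩ := F.exists_notMem
    exact (abs_nonneg _).trans (hF k hk)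
  · rintro c ⟨F, hcard, hF⟩
    refine ⟨F.image e, Finset.card_image_le.trans hcard, fun k hk => ?_⟩
    by_cases hke : k ∈ Set.range e
    · obtain ⟨j, rfl⟩ := hke
      exact (hxy j).trans (hF j fun hj => hk (Finset.mem_image_of_mem e hj))
    · obtain ⟨j, hj⟩ := F.exists_notMem
      rw [hx₀ k hke, abs_zero]
      exact (abs_nonneg _).trans (hF j hj)

namespace BanachSymmSeqSpace

variable (S : BanachSymmSeqSpace)

theorem nrm_nonneg {x : ℕ → ℝ} (hx : x ∈ S.carrier) : 0 ≤ S.nrm x := by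
  rcases eq_or_ne x 0 with rfl | h
  · exact S.nrm_zero.ge
  · exact (S.nrm_pos x hx h).le

theorem mem_and_nrm_le_of_comp {x y : ℕ → ℝ} (hy : y ∈ S.carrier) (e : ℕ → ℕ)
    (hx₀ : ∀ k ∉ Set.range e, x k = 0) (hxy : ∀ j, |x (e j)| ≤ |y j|) :
    x ∈ S.carrier ∧ S.nrm x ≤ S.nrm y := by
  obtain ⟨C, hC⟩ := S.bdd y hy
  refine S.symmetric x y hy ⟨C, fun k => ?_⟩ (decRearrange_le_of_comp ⟨C, hC⟩ e hx₀ hxy)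
  by_cases hke : k ∈ Set.range e
  · obtain ⟨j, rfl⟩ := hke
    exact (hxy j).trans (hC j)
  · rw [hx₀ k hke, abs_zero]
    exact (abs_nonneg _).trans (hC 0)

theorem mem_and_nrm_le_of_abs_le {x y : ℕ → ℝ} (hy : y ∈ S.carrier) (h : ∀ k, |x k| ≤ |y k|) :
    x ∈ S.carrier ∧ S.nrm x ≤ S.nrm y :=
  S.mem_and_nrm_le_of_comp hy id (fun k hk => absurd ⟨k, rfl⟩ hk) h

theorem dilate_mem {ξ : ℕ → ℝ} (hξ : ξ ∈ S.carrier) : (fun k => ξ (k / 2)) ∈ S.carrier := by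
  have spread_mem (i : ℕ) (hi : i < 2) :
      (fun k => if k % 2 = i then ξ (k / 2) else 0) ∈ S.carrier := by
    refine (S.mem_and_nrm_le_of_comp hξ (fun j => 2 * j + i) (fun k hk => ?_) fun j => ?_).1
    · refine if_neg fun hki => hk ⟨k / 2, ?_⟩
      dsimp only
      omega
    · have h1 : (2 * j + i) % 2 = i := by omega
      have h2 : (2 * j + i) / 2 = j := by omega
      simp [h1, h2]
  convert S.add_mem _ (spread_mem 0 two_pos) _ (spread_mem 1 one_lt_two) using 1
  funext k
  rcases Nat.mod_two_eq_zero_or_one k with h | h <;> simp [h]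

end BanachSymmSeqSpace

section SingularValues

variable {H : Type*} [NormedAddCommGroup H] [InnerProductSpace ℂ H]

def approxErrors (x : H →L[ℂ] H) (n : ℕ) : Set ℝ :=
  {c : ℝ | ∃ F : H →L[ℂ] H, FiniteDimensional ℂ (LinearMap.range (F : H →ₗ[ℂ] H)) ∧
    Module.finrank ℂ (LinearMap.range (F : H →ₗ[ℂ] H)) ≤ n ∧ ‖x - F‖ = c}

theorem norm_mem_approxErrors (x : H →L[ℂ] H) (n : ℕ) : ‖x‖ ∈ approxErrors x n := by
  refine ⟨0, ?_, ?_, by simp⟩ <;>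
    rw [ContinuousLinearMap.toLinearMap_zero, LinearMap.range_zero]
  · infer_instance
  · rw [finrank_bot]; exact n.zero_le

theorem bddBelow_approxErrors (x : H →L[ℂ] H) (n : ℕ) : BddBelow (approxErrors x n) :=
  ⟨0, by rintro _ ⟨F, -, -, rfl⟩; positivity⟩

theorem singVal_le_norm_sub {x F : H →L[ℂ] H} {n : ℕ} {K : Submodule ℂ H} [FiniteDimensional ℂ K]
    (hFK : LinearMap.range (F : H →ₗ[ℂ] H) ≤ K) (hK : Module.finrank ℂ K ≤ n) :
    singVal x n ≤ ‖x - F‖ :=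
  csInf_le (bddBelow_approxErrors x n)
    ⟨F, Submodule.finiteDimensional_of_le hFK, (Submodule.finrank_mono hFK).trans hK, rfl⟩

theorem le_singVal {x : H →L[ℂ] H} {n : ℕ} {a : ℝ}
    (h : ∀ F : H →L[ℂ] H, FiniteDimensional ℂ (LinearMap.range (F : H →ₗ[ℂ] H)) →
      Module.finrank ℂ (LinearMap.range (F : H →ₗ[ℂ] H)) ≤ n → a ≤ ‖x - F‖) :
    a ≤ singVal x n :=
  le_csInf ⟨_, norm_mem_approxErrors x n⟩ fun _ ⟨F, hF, hn, hc⟩ => hc ▸ h F hF hn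

theorem singVal_nonneg (x : H →L[ℂ] H) (n : ℕ) : 0 ≤ singVal x n :=
  le_singVal fun _ _ _ => norm_nonneg _

theorem singVal_le_norm (x : H →L[ℂ] H) (n : ℕ) : singVal x n ≤ ‖x‖ :=
  csInf_le (bddBelow_approxErrors x n) (norm_mem_approxErrors x n)

theorem singVal_zero (n : ℕ) : singVal (0 : H →L[ℂ] H) n = 0 :=
  le_antisymm (by simpa using singVal_le_norm (0 : H →L[ℂ] H) n) (singVal_nonneg 0 n)

theorem singVal_antitone (x : H →L[ℂ] H) : Antitone (singVal x) := fun _ _ hmn =>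
  le_singVal fun _ _ hF => singVal_le_norm_sub le_rfl (hF.trans hmn)

theorem singVal_add_le (x y : H →L[ℂ] H) (m n : ℕ) :
    singVal (x + y) (m + n) ≤ singVal x m + singVal y n := by
  rw [← sub_le_iff_le_add]
  refine le_singVal fun F _ hFm => ?_
  rw [sub_le_iff_le_add, ← sub_le_iff_le_add']
  refine le_singVal fun G _ hGn => ?_
  rw [sub_le_iff_le_add']
  calc singVal (x + y) (m + n) ≤ ‖(x - F) + (y - G)‖ := by
        rw [← add_sub_add_comm]
        exact singVal_le_norm_sub (LinearMap.range_add_le _ _)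
          ((Submodule.finrank_add_le_finrank_add_finrank _ _).trans (add_le_add hFm hGn))
    _ ≤ ‖x - F‖ + ‖y - G‖ := norm_add_le _ _

theorem singVal_mul_mul_le (u x w : H →L[ℂ] H) (n : ℕ) :
    singVal (u * x * w) n ≤ ‖u‖ * ‖w‖ * singVal x n := by
  show _ ≤ (‖u‖ * ‖w‖) • sInf (approxErrors x n)
  rw [← Real.sInf_smul_of_nonneg (by positivity)]
  refine le_csInf (Set.Nonempty.smul_set ⟨_, norm_mem_approxErrors x n⟩) ?_
  rintro _ ⟨_, ⟨F, _, hn, rfl⟩, rfl⟩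
  have hrange : LinearMap.range ((u * F * w : H →L[ℂ] H) : H →ₗ[ℂ] H) ≤
      (LinearMap.range (F : H →ₗ[ℂ] H)).map (u : H →ₗ[ℂ] H) := by
    rintro _ ⟨v, rfl⟩
    exact Submodule.mem_map_of_mem (LinearMap.mem_range_self _ (w v))
  calc singVal (u * x * w) n ≤ ‖u * (x - F) * w‖ := by
        rw [mul_sub, sub_mul]
        exact singVal_le_norm_sub hrange ((Submodule.finrank_map_le _ _).trans hn)
    _ ≤ ‖u‖ * ‖x - F‖ * ‖w‖ := norm_mul₃_le
    _ = (‖u‖ * ‖w‖) • ‖x - F‖ := by rw [smul_eq_mul]; ring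

end SingularValues

section Factorization

variable {H : Type*} [NormedAddCommGroup H] [InnerProductSpace ℂ H] [CompleteSpace H]

theorem norm_apply_le_of_star_mul_self_le {a b : H →L[ℂ] H} (h : star a * a ≤ star b * b)
    (v : H) : ‖a v‖ ≤ ‖b v‖ := by
  have hv := ((ContinuousLinearMap.le_def _ _).1 h).re_inner_nonneg_left v
  rw [sub_apply, inner_sub_left, map_sub, sub_nonneg,
    ContinuousLinearMap.star_eq_adjoint, ContinuousLinearMap.star_eq_adjoint] at hv
  rw [← sq_le_sq₀ (norm_nonneg _) (norm_nonneg _),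
    ContinuousLinearMap.apply_norm_sq_eq_inner_adjoint_left,
    ContinuousLinearMap.apply_norm_sq_eq_inner_adjoint_left]
  exact hv

/-- Douglas' factorisation: `u` is `b v ↦ a v` on the range of `b`, extended by continuity to its
closure and by zero on the orthogonal complement. -/
theorem exists_norm_le_one_mul_eq {a b : H →L[ℂ] H} (h : ∀ v, ‖a v‖ ≤ ‖b v‖) :
    ∃ u : H →L[ℂ] H, ‖u‖ ≤ 1 ∧ u * b = a := by
  set K := (LinearMap.range (b : H →ₗ[ℂ] H)).topologicalClosure
  let e : H →ₗ[ℂ] K := (b : H →ₗ[ℂ] H).codRestrict K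
    fun v => Submodule.le_topologicalClosure _ (LinearMap.mem_range_self _ v)
  have he : DenseRange e := by
    rw [DenseRange, Topology.IsInducing.subtypeVal.dense_iff, ← Set.range_comp]
    rintro ⟨x, hx⟩
    rw [SetLike.mem_coe, ← SetLike.mem_coe, Submodule.topologicalClosure_coe,
      LinearMap.coe_range] at hx
    exact hx
  have hnorm (v : H) : ‖(a : H →ₗ[ℂ] H) v‖ ≤ 1 * ‖e v‖ := by rw [one_mul]; exact h v
  let u₀ : K →L[ℂ] H := (a : H →ₗ[ℂ] H).extendOfNorm e
  refine ⟨u₀ ∘L K.orthogonalProjectionOnto, ?_, ?_⟩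
  · calc ‖u₀ ∘L K.orthogonalProjectionOnto‖ ≤ 1 * 1 :=
          (ContinuousLinearMap.opNorm_comp_le _ _).trans (mul_le_mul
            (LinearMap.opNorm_extendOfNorm_le he zero_le_one hnorm)
            (Submodule.orthogonalProjectionOnto_norm_le K) (norm_nonneg _) zero_le_one)
      _ = 1 := one_mul 1
  · ext v
    have hproj : K.orthogonalProjectionOnto (b v) = e v :=
      Submodule.orthogonalProjectionOnto_mem_subspace_eq_self (e v)
    simp [hproj, LinearMap.extendOfNorm_eq he ⟨1, hnorm⟩, u₀]

theorem exists_norm_le_one_conj_eq_of_le {d s : H →L[ℂ] H} (hd : 0 ≤ d) (hds : d ≤ s) :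
    ∃ u : H →L[ℂ] H, ‖u‖ ≤ 1 ∧ u * s * star u = d := by
  have hs : 0 ≤ s := hd.trans hds
  have hsqrt (a : H →L[ℂ] H) (ha : 0 ≤ a) : star (CFC.sqrt a) * CFC.sqrt a = a := by
    rw [(CFC.sqrt_nonneg a).isSelfAdjoint.star_eq, CFC.sqrt_mul_sqrt_self a ha]
  obtain ⟨u, hu, hud⟩ := exists_norm_le_one_mul_eq <| norm_apply_le_of_star_mul_self_le
    (a := CFC.sqrt d) (b := CFC.sqrt s) (by rwa [hsqrt d hd, hsqrt s hs])
  refine ⟨u, hu, ?_⟩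
  calc u * s * star u = u * CFC.sqrt s * star (u * CFC.sqrt s) := by
        rw [star_mul, (CFC.sqrt_nonneg s).isSelfAdjoint.star_eq, ← mul_assoc,
          mul_assoc u (CFC.sqrt s), CFC.sqrt_mul_sqrt_self s hs]
    _ = d := by rw [hud, (CFC.sqrt_nonneg d).isSelfAdjoint.star_eq, CFC.sqrt_mul_sqrt_self d hd]

end Factorization

section SymmetricIdeal

variable {H : Type*} [NormedAddCommGroup H] [InnerProductSpace ℂ H] (S : BanachSymmSeqSpace)

theorem CEnorm_nonneg {x : H →L[ℂ] H} (hx : x ∈ CE S) : 0 ≤ CEnorm S x :=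
  S.nrm_nonneg hx.2

theorem zero_mem_CE : (0 : H →L[ℂ] H) ∈ CE S :=
  ⟨isCompactOperator_zero, by simp only [singVal_zero]; exact S.zero_mem⟩

theorem mul_mul_mem_CE {x : H →L[ℂ] H} (hx : x ∈ CE S) (u w : H →L[ℂ] H) :
    u * x * w ∈ CE S ∧ CEnorm S (u * x * w) ≤ ‖u‖ * ‖w‖ * CEnorm S x := by
  have hc : 0 ≤ ‖u‖ * ‖w‖ := by positivity
  obtain ⟨hmem, hnrm⟩ := S.mem_and_nrm_le_of_abs_le (S.smul_mem (‖u‖ * ‖w‖) _ hx.2)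
    (x := fun n => singVal (u * x * w) n) fun n => by
      simpa [abs_of_nonneg (singVal_nonneg _ _), abs_of_nonneg hc] using singVal_mul_mul_le u x w n
  refine ⟨⟨(hx.1.comp_clm w).clm_comp u, hmem⟩, hnrm.trans_eq ?_⟩
  rw [S.nrm_smul _ _ hx.2, abs_of_nonneg hc, CEnorm]

theorem smul_mem_CE (c : ℝ) {x : H →L[ℂ] H} (hx : x ∈ CE S) :
    c • x ∈ CE S ∧ CEnorm S (c • x) ≤ |c| * CEnorm S x := by
  have hone : ‖(1 : H →L[ℂ] H)‖ ≤ 1 :=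
    ContinuousLinearMap.opNorm_le_bound _ zero_le_one fun v => by simp
  have hcx : c • x = (c • 1) * x * 1 := by simp
  obtain ⟨hmem, hnrm⟩ := mul_mul_mem_CE S hx (c • 1) 1
  refine ⟨hcx ▸ hmem, hcx ▸ hnrm.trans (mul_le_mul_of_nonneg_right ?_ (CEnorm_nonneg S hx))⟩
  calc ‖c • (1 : H →L[ℂ] H)‖ * ‖(1 : H →L[ℂ] H)‖ ≤ (|c| * 1) * 1 := by
        gcongr
        exact (norm_smul_le c (1 : H →L[ℂ] H)).trans (by rw [Real.norm_eq_abs]; gcongr)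
    _ = |c| := by ring

theorem add_mem_CE {x y : H →L[ℂ] H} (hx : x ∈ CE S) (hy : y ∈ CE S) : x + y ∈ CE S := by
  refine ⟨hx.1.add hy.1, (S.mem_and_nrm_le_of_abs_le
    (S.add_mem _ (S.dilate_mem hx.2) _ (S.dilate_mem hy.2)) fun n => ?_).1⟩
  have hsplit : n / 2 + (n - n / 2) = n := by omega
  rw [Pi.add_apply, abs_of_nonneg (singVal_nonneg _ _),
    abs_of_nonneg (add_nonneg (singVal_nonneg x _) (singVal_nonneg y _))]
  calc singVal (x + y) n ≤ singVal x (n / 2) + singVal y (n - n / 2) := by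
        simpa only [hsplit] using singVal_add_le x y (n / 2) (n - n / 2)
    _ ≤ singVal x (n / 2) + singVal y (n / 2) := by
        gcongr; exact singVal_antitone y (by omega)

end SymmetricIdeal

instance Submodule.posSMulMono {R M : Type*} [Semiring R] [PartialOrder R] [AddCommMonoid M]
    [PartialOrder M] [Module R M] [PosSMulMono R M] (W : Submodule R M) : PosSMulMono R W :=
  ⟨fun _ hc _ _ hab => smul_le_smul_of_nonneg_left (β := M) hab hc⟩

section SelfAdjointPart

variable {H : Type*} [NormedAddCommGroup H] [InnerProductSpace ℂ H] [CompleteSpace H]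
  (S : BanachSymmSeqSpace)

variable (H) in
def CEhSubmodule : Submodule ℝ (H →L[ℂ] H) where
  carrier := CEh S
  add_mem' hx hy := ⟨add_mem_CE S hx.1 hy.1, hx.2.add hy.2⟩
  zero_mem' := ⟨zero_mem_CE S, .zero _⟩
  smul_mem' c _ hx := ⟨(smul_mem_CE S c hx.1).1, (IsSelfAdjoint.all c).smul hx.2⟩

noncomputable def conjCEh (u : H →L[ℂ] H) : CEhSubmodule H S →ₗ[ℝ] CEhSubmodule H S :=
  (LinearMap.mulLeftRight ℝ (u, star u)).restrict fun _ hx =>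
    ⟨(mul_mul_mem_CE S hx.1 u (star u)).1, hx.2.conjugate u⟩

theorem CEnorm_conjCEh_le {u : H →L[ℂ] H} (hu : ‖u‖ ≤ 1) (x : CEhSubmodule H S) :
    CEnorm S (conjCEh S u x : H →L[ℂ] H) ≤ CEnorm S (x : H →L[ℂ] H) := by
  refine (mul_mul_mem_CE S x.2.1 u (star u)).2.trans ?_
  rw [norm_star]
  exact mul_le_of_le_one_left (CEnorm_nonneg S x.2.1) (mul_le_one₀ hu (norm_nonneg u) hu)

theorem boundedBySums_CEnorm {f : CEhSubmodule H S →ₗ[ℝ] ℝ} {M : ℝ} (hM : 0 ≤ M)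
    (hf : ∀ x, |f x| ≤ M * CEnorm S (x : H →L[ℂ] H)) :
    BoundedBySums f (fun x => M * CEnorm S (x : H →L[ℂ] H)) := by
  intro d L hd hdL
  obtain ⟨u, hu, hud⟩ := exists_norm_le_one_conj_eq_of_le (s := (L.sum : H →L[ℂ] H)) hd hdL
  have hd_eq : d = conjCEh S u L.sum := Subtype.ext hud.symm
  rw [hd_eq, map_list_sum, map_list_sum, List.map_map]
  exact List.sum_le_sum fun c _ => (le_abs_self _).trans <| (hf _).trans <|
    mul_le_mul_of_nonneg_left (CEnorm_conjCEh_le S hu c) hM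

end SelfAdjointPart

section Functionals

variable {H : Type*} [NormedAddCommGroup H] [InnerProductSpace ℂ H] [CompleteSpace H]
  {S : BanachSymmSeqSpace}

noncomputable def RealFunctionalOn.toLinearMap {f : (H →L[ℂ] H) → ℝ} (hf : RealFunctionalOn S f) :
    CEhSubmodule H S →ₗ[ℝ] ℝ where
  toFun x := f x
  map_add' x y := hf.1 x x.2 y y.2
  map_smul' c x := by simpa [Complex.coe_smul] using hf.2.1 c x x.2

theorem RealFunctionalOn.exists_nonneg_bound {f : (H →L[ℂ] H) → ℝ} (hf : RealFunctionalOn S f) :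
    ∃ M, 0 ≤ M ∧ ∀ a ∈ CEh S, |f a| ≤ M * CEnorm S a := by
  obtain ⟨M, hM⟩ := hf.2.2
  exact ⟨|M|, abs_nonneg M, fun a ha =>
    (hM a ha).trans (mul_le_mul_of_nonneg_right (le_abs_self M) (CEnorm_nonneg S ha.1))⟩

open Classical in
noncomputable def extendByZero (G : CEhSubmodule H S →ₗ[ℝ] ℝ) (a : H →L[ℂ] H) : ℝ :=
  if h : a ∈ CEh S then G ⟨a, h⟩ else 0

theorem extendByZero_of_mem (G : CEhSubmodule H S →ₗ[ℝ] ℝ) {a : H →L[ℂ] H} (ha : a ∈ CEh S) :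
    extendByZero G a = G ⟨a, ha⟩ :=
  dif_pos ha

theorem realFunctionalOn_extendByZero (G : CEhSubmodule H S →ₗ[ℝ] ℝ) {M : ℝ}
    (hG : ∀ x, |G x| ≤ M * CEnorm S (x : H →L[ℂ] H)) : RealFunctionalOn S (extendByZero G) := by
  refine ⟨fun a ha b hb => ?_, fun c a ha => ?_, M, fun a ha => ?_⟩
  · have hab : a + b ∈ CEhSubmodule H S := add_mem (show a ∈ CEhSubmodule H S from ha) hb
    rw [extendByZero_of_mem G ha, extendByZero_of_mem G hb, extendByZero_of_mem G hab]
    exact map_add G ⟨a, ha⟩ ⟨b, hb⟩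
  · have hca : c • a ∈ CEhSubmodule H S :=
      Submodule.smul_mem _ c (show a ∈ CEhSubmodule H S from ha)
    rw [Complex.coe_smul, extendByZero_of_mem G hca, extendByZero_of_mem G ha]
    exact map_smul G c ⟨a, ha⟩
  · rw [extendByZero_of_mem G ha]
    exact hG ⟨a, ha⟩

theorem abs_le_of_le_CEnorm (G : CEhSubmodule H S →ₗ[ℝ] ℝ) {M : ℝ} (hM : 0 ≤ M)
    (hG : ∀ x, G x ≤ M * CEnorm S (x : H →L[ℂ] H)) (x : CEhSubmodule H S) :
    |G x| ≤ M * CEnorm S (x : H →L[ℂ] H) := by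
  have hneg : CEnorm S (-(x : H →L[ℂ] H)) ≤ CEnorm S (x : H →L[ℂ] H) := by
    simpa using (smul_mem_CE S (-1) x.2.1).2
  refine abs_le.2 ⟨?_, hG x⟩
  have := (hG (-x)).trans (mul_le_mul_of_nonneg_left hneg hM)
  rw [map_neg] at this
  linarith

end Functionals

theorem functional_difference_of_positives_general
    {H : Type*} [NormedAddCommGroup H] [InnerProductSpace ℂ H] [CompleteSpace H]
    (S : BanachSymmSeqSpace)
    (f : (H →L[ℂ] H) → ℝ) (hf : RealFunctionalOn S f) :
    ∃ g h : (H →L[ℂ] H) → ℝ,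
      RealFunctionalOn S g ∧ RealFunctionalOn S h ∧
      (∀ a ∈ CEh (H := H) S, a.IsPositive → 0 ≤ g a) ∧
      (∀ a ∈ CEh (H := H) S, a.IsPositive → 0 ≤ h a) ∧
      (∀ a ∈ CEh (H := H) S, f a = g a - h a) := by
  obtain ⟨M, hM0, hM⟩ := hf.exists_nonneg_bound
  set F := hf.toLinearMap
  have hF (x : CEhSubmodule H S) : |F x| ≤ M * CEnorm S (x : H →L[ℂ] H) := hM x x.2
  obtain ⟨G, hGM, hG0, hFG⟩ := exists_nonneg_linearMap_ge (boundedBySums_CEnorm S hM0 hF)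
    fun c hc x => by
      simpa [abs_of_pos hc, mul_left_comm M] using
        mul_le_mul_of_nonneg_left (smul_mem_CE S c x.2.1).2 hM0
  have hG := abs_le_of_le_CEnorm G hM0 hGM
  refine ⟨extendByZero G, extendByZero (G - F), realFunctionalOn_extendByZero G hG,
    realFunctionalOn_extendByZero (G - F) (M := M + M) fun x => ?_, fun a ha hpos => ?_,
    fun a ha hpos => ?_, fun a ha => ?_⟩
  · rw [LinearMap.sub_apply, add_mul]
    exact (abs_sub _ _).trans (add_le_add (hG x) (hF x))
  · rw [extendByZero_of_mem G ha]
    exact hG0 ⟨a, ha⟩ ((ContinuousLinearMap.nonneg_iff_isPositive a).2 hpos)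
  · rw [extendByZero_of_mem _ ha, LinearMap.sub_apply, sub_nonneg]
    exact hFG ⟨a, ha⟩ ((ContinuousLinearMap.nonneg_iff_isPositive a).2 hpos)
  · rw [extendByZero_of_mem _ ha, extendByZero_of_mem _ ha, LinearMap.sub_apply, sub_sub_cancel]
    rfl

/-- Every continuous real-linear functional on the real Banach space
`C_E^h` of self-adjoint elements of `C_E` is the difference of two positive continuous
linear functionals on `C_E^h`. -/
theorem functional_difference_of_positives
    {H : Type*} [NormedAddCommGroup H] [InnerProductSpace ℂ H] [CompleteSpace H]
    [TopologicalSpace.SeparableSpace H] (hinf : ¬ FiniteDimensional ℂ H)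
    (S : BanachSymmSeqSpace) (hc0 : S.SubsetC0)
    (f : (H →L[ℂ] H) → ℝ) (hf : RealFunctionalOn S f) :
    ∃ g h : (H →L[ℂ] H) → ℝ,
      RealFunctionalOn S g ∧ RealFunctionalOn S h ∧
      (∀ a ∈ CEh (H := H) S, a.IsPositive → 0 ≤ g a) ∧
      (∀ a ∈ CEh (H := H) S, a.IsPositive → 0 ≤ h a) ∧
      (∀ a ∈ CEh (H := H) S, f a = g a - h a) :=
  functional_difference_of_positives_general S f hf
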